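/- arXiv:1912.12195 — 2 statements merged into one kernel-verified Lean document; each statement's English description precedes it below -/
import Mathlib

section
/- Let u be a smooth function on S² and t > 0, and suppose both u and u_{Φ_{N,t}} := u∘Φ_{N,t} + (1/2) log|det dΦ_{N,t}| are centered, i.e. ∫_{S²} e^{2u} x dA = 0 and ∫_{S²} e^{2u_{Φ_{N,t}}} x dA = 0, where x is the position vector in R³. Then t = 1, i.e. Φ_{N,t} is the identity. -/
open MeasureTheory Real

noncomputable section

abbrev E3 := EuclideanSpace ℝ (Fin 3)

noncomputable def sphereMeasure : Measure (Metric.sphere (0 : E3) 1) :=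
  (volume : Measure E3).toSphere

/-- Stereographic projection from the north pole. -/
noncomputable def stereoE (x : E3) : ℂ :=
  ((x 0 : ℂ) + (x 1 : ℂ) * Complex.I) / ((1 : ℂ) - (x 2 : ℂ))

/-- Inverse stereographic projection. -/
noncomputable def stereoInvE (z : ℂ) : E3 :=
  (EuclideanSpace.equiv (Fin 3) ℝ).symm
    ![2 * z.re / (1 + Complex.normSq z), 2 * z.im / (1 + Complex.normSq z),
      (Complex.normSq z - 1) / (Complex.normSq z + 1)]

/-- The scale transformation `Φ_{N,t}` (fixing the north pole). -/
noncomputable def scaleMapE (t : ℝ) (x : E3) : E3 :=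
  if x 2 = 1 then x else stereoInvE ((t : ℂ) * stereoE x)

/-! Write `y = x₃` for the height. Since `|z|² = (1 + y) / (1 - y)` in stereographic
coordinates, `Φ_{N,s}` sends height `y` to `(s² (1 + y) - (1 - y)) / (s² (1 + y) + (1 - y))`,
which exceeds `y` by `(s² - 1) (1 - y²) / (s² (1 + y) + (1 - y))`. Testing the pullback identity
against `f = x₃`, where both centers of mass have vanishing third component, gives
`(s² - 1) ∫ e^{2u} (1 - y²) / (s² (1 + y) + (1 - y)) dA = 0` for `s = t⁻¹`. This integral is
positive, so `s² = 1`. -/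

open Metric Set

local notation "S²" => sphere (0 : E3) 1

def scaledHeight (s y : ℝ) : ℝ :=
  (s ^ 2 * (1 + y) - (1 - y)) / (s ^ 2 * (1 + y) + (1 - y))

theorem scaledHeight_sub_self {s y : ℝ} (h : s ^ 2 * (1 + y) + (1 - y) ≠ 0) :
    scaledHeight s y - y = (s ^ 2 - 1) * ((1 - y ^ 2) / (s ^ 2 * (1 + y) + (1 - y))) := by
  rw [scaledHeight]
  field_simp
  ring

theorem scaledHeight_denom_pos {s y : ℝ} (hs : s ≠ 0) (hy : y ∈ Icc (-1) 1) :
    0 < s ^ 2 * (1 + y) + (1 - y) := by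
  have hs2 : 0 < s ^ 2 := by positivity
  rcases hy.2.lt_or_eq with hy1 | rfl
  · nlinarith [hy.1]
  · linarith

theorem EuclideanSpace.apply_mem_Icc_of_mem_sphere {ι : Type*} [Fintype ι]
    {x : EuclideanSpace ℝ ι} (hx : x ∈ sphere 0 1) (i : ι) : x i ∈ Icc (-1) 1 :=
  abs_le.mp ((PiLp.norm_apply_le x i).trans_eq (mem_sphere_zero_iff_norm.mp hx))

theorem normSq_stereoE {x : E3} (hx : x ∈ S²) (h2 : x 2 ≠ 1) :
    Complex.normSq (stereoE x) = (1 + x 2) / (1 - x 2) := by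
  have hsum : x 0 ^ 2 + x 1 ^ 2 + x 2 ^ 2 = 1 := by
    have := EuclideanSpace.real_norm_sq_eq x
    rw [mem_sphere_zero_iff_norm.mp hx, Fin.sum_univ_three] at this
    linarith
  have h1 : 1 - x 2 ≠ 0 := sub_ne_zero.mpr (Ne.symm h2)
  rw [stereoE, Complex.normSq_div, Complex.normSq_add_mul_I, ← Complex.ofReal_one,
    ← Complex.ofReal_sub, Complex.normSq_ofReal]
  field_simp
  linear_combination hsum

theorem scaleMapE_apply_two {s : ℝ} (hs : s ≠ 0) {x : E3} (hx : x ∈ S²) :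
    scaleMapE s x 2 = scaledHeight s (x 2) := by
  have hD := scaledHeight_denom_pos hs (EuclideanSpace.apply_mem_Icc_of_mem_sphere hx 2)
  rw [scaledHeight, scaleMapE]
  split_ifs with h2
  · rw [h2] at hD ⊢
    field_simp
    ring
  · change (Complex.normSq _ - 1) / (Complex.normSq _ + 1) = _
    rw [map_mul, Complex.normSq_ofReal, normSq_stereoE hx h2]
    field_simp

theorem EuclideanSpace.integral_apply {α ι : Type*} [MeasurableSpace α] {μ : Measure α}
    [Fintype ι] {f : α → EuclideanSpace ℝ ι} (hf : Integrable f μ) (i : ι) :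
    ∫ a, f a i ∂μ = (∫ a, f a ∂μ) i :=
  (EuclideanSpace.proj i).integral_comp_comm hf

instance : IsFiniteMeasure sphereMeasure := by unfold sphereMeasure; infer_instance

instance : sphereMeasure.IsOpenPosMeasure := by unfold sphereMeasure; infer_instance

theorem Continuous.integrable_sphereMeasure {F : Type*} [NormedAddCommGroup F] {f : S² → F}
    (hf : Continuous f) : Integrable f sphereMeasure :=
  hf.integrable_of_hasCompactSupport (.of_compactSpace f)

theorem integral_exp_mul_apply_eq_zero_of_centered {v : E3 → ℝ} (hv : Continuous v)
    (hcenter : ∫ p : S², exp (2 * v p) • (p : E3) ∂sphereMeasure = 0) (i : Fin 3) :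
    ∫ p : S², exp (2 * v p) * (p : E3) i ∂sphereMeasure = 0 := by
  have hint : Integrable (fun p : S² ↦ exp (2 * v p) • (p : E3)) sphereMeasure :=
    Continuous.integrable_sphereMeasure (by fun_prop)
  simpa [hcenter] using EuclideanSpace.integral_apply hint i

theorem sq_eq_one_of_integral_mul_scaledHeight_eq {w : S² → ℝ} (hw : Continuous w)
    (hw_pos : ∀ p, 0 < w p) {s : ℝ} (hs : s ≠ 0)
    (h : ∫ p, w p * scaledHeight s ((p : E3) 2) ∂sphereMeasure
      = ∫ p, w p * (p : E3) 2 ∂sphereMeasure) :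
    s ^ 2 = 1 := by
  have hy : ∀ p : S², (p : E3) 2 ∈ Icc (-1) 1 :=
    fun p ↦ EuclideanSpace.apply_mem_Icc_of_mem_sphere p.2 2
  have hD : ∀ p : S², 0 < s ^ 2 * (1 + (p : E3) 2) + (1 - (p : E3) 2) :=
    fun p ↦ scaledHeight_denom_pos hs (hy p)
  set g : S² → ℝ := fun p ↦
    w p * ((1 - (p : E3) 2 ^ 2) / (s ^ 2 * (1 + (p : E3) 2) + (1 - (p : E3) 2)))
  have hg : Continuous g :=
    hw.mul ((by fun_prop : Continuous fun p : S² ↦ 1 - (p : E3) 2 ^ 2).div (by fun_prop)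
      fun p ↦ (hD p).ne')
  have hg_nonneg : 0 ≤ g := fun p ↦
    mul_nonneg (hw_pos p).le (div_nonneg (by nlinarith [(hy p).1, (hy p).2]) (hD p).le)
  have hshift : ∀ p : S²,
      w p * scaledHeight s ((p : E3) 2) - w p * (p : E3) 2 = (s ^ 2 - 1) * g p :=
    fun p ↦ by rw [← mul_sub, scaledHeight_sub_self (hD p).ne']; ring
  have hheight : Continuous fun p : S² ↦ w p * scaledHeight s ((p : E3) 2) := by
    unfold scaledHeight
    exact hw.mul (.div (by fun_prop) (by fun_prop) fun p ↦ (hD p).ne')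
  have hzero : (s ^ 2 - 1) * ∫ p, g p ∂sphereMeasure = 0 := by
    rw [← integral_const_mul, ← integral_congr_ae (.of_forall hshift),
      integral_sub hheight.integrable_sphereMeasure
        (Continuous.integrable_sphereMeasure (by fun_prop)), h, sub_self]
  let e : S² := ⟨EuclideanSpace.single 0 1, by simp⟩
  have hpos : 0 < ∫ p, g p ∂sphereMeasure :=
    integral_pos_of_integrable_nonneg_nonzero (x := e) hg hg.integrable_sphereMeasure hg_nonneg
      (by simp [g, e, (hw_pos e).ne', (by positivity : s ^ 2 + 1 ≠ 0)])
  linarith [(mul_eq_zero.mp hzero).resolve_right hpos.ne']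

theorem centered_both_implies_scale_is_identity
    (t : ℝ) (ht : 0 < t) (u uΦ : E3 → ℝ)
    (hu : Continuous u) (huΦ : Continuous uΦ)
    (hpull : ∀ f : E3 → ℝ, Continuous f →
      (∫ p : Metric.sphere (0 : E3) 1,
          Real.exp (2 * uΦ (p : E3)) * f (p : E3) ∂sphereMeasure)
        = ∫ p : Metric.sphere (0 : E3) 1,
            Real.exp (2 * u (p : E3)) * f (scaleMapE t⁻¹ (p : E3)) ∂sphereMeasure)
    (hcenter_u : (∫ p : Metric.sphere (0 : E3) 1,
        Real.exp (2 * u (p : E3)) • (p : E3) ∂sphereMeasure) = 0)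
    (hcenter_uΦ : (∫ p : Metric.sphere (0 : E3) 1,
        Real.exp (2 * uΦ (p : E3)) • (p : E3) ∂sphereMeasure) = 0) :
    t = 1 := by
  have hs : t⁻¹ ≠ 0 := inv_ne_zero ht.ne'
  have hheight : ∫ p : S², exp (2 * u p) * scaledHeight t⁻¹ ((p : E3) 2) ∂sphereMeasure
      = ∫ p : S², exp (2 * u p) * (p : E3) 2 ∂sphereMeasure := by
    calc _ = ∫ p : S², exp (2 * u p) * scaleMapE t⁻¹ p 2 ∂sphereMeasure := by
          simp_rw [scaleMapE_apply_two hs (Subtype.prop _)]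
      _ = ∫ p : S², exp (2 * uΦ p) * (p : E3) 2 ∂sphereMeasure :=
          (hpull (fun x ↦ x 2) (by fun_prop)).symm
      _ = 0 := integral_exp_mul_apply_eq_zero_of_centered huΦ hcenter_uΦ 2
      _ = _ := (integral_exp_mul_apply_eq_zero_of_centered hu hcenter_u 2).symm
  have hsq :=
    sq_eq_one_of_integral_mul_scaledHeight_eq (by fun_prop) (fun _ ↦ exp_pos _) hs hheight
  rwa [inv_pow, inv_eq_one, pow_eq_one_iff_of_nonneg ht.le two_ne_zero] at hsq
end
end

section
/- Let O ∈ O(3) and suppose there exist a point N ∈ S², a unit tangent vector v ∈ T_N S², and δ > 0 small such that: |O(N) − N| ≲ δ; O(v) = a v + O(δ) for some a > 0; and O preserves the orientation of T_N S². Then |O − I| ≲ δ. -/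
/-!
Expand the identity in the orthonormal frame `(N, v, w)` with `w = N × v`: every entry of
`O - 1` is bounded by `‖ON - N‖ + ‖Ov - v‖ + ‖Ow - w‖`. The first term is `O(δ)` by hypothesis,
and so is the second, because `|a - 1| = |‖av‖ - ‖Ov‖| ≤ ‖Ov - av‖`. For the third, `Ow` is a unit
vector orthogonal to `ON ≈ N` and `Ov ≈ v`, so its components along `N` and `v` are `O(δ)` and
`γ = ⟪w, Ow⟫` satisfies `γ² = 1 - O(δ²)`. The orientation hypothesis says that the triple product
`det (Ov, Ow, N) = γ + O(δ)` is positive, which excludes `γ ≈ -1`; once `γ ≥ 0`,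
`‖Ow - w‖² = 2 - 2γ ≤ 2 (1 - γ²) = O(δ²)`.
-/

open Finset Matrix WithLp
open scoped RealInnerProductSpace

theorem norm_sub_le_two_mul_of_norm_sub_smul_le {F : Type*} [NormedAddCommGroup F]
    [NormedSpace ℝ F] {x y : F} {a ε : ℝ} (hx : ‖x‖ = 1) (hy : ‖y‖ = 1) (ha : 0 ≤ a)
    (h : ‖y - a • x‖ ≤ ε) : ‖y - x‖ ≤ 2 * ε := by
  have hnorm : ‖a • x‖ = a := by rw [norm_smul, hx, Real.norm_of_nonneg ha, mul_one]
  have ha1 : |a - 1| ≤ ε :=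
    calc |a - 1| = |‖a • x‖ - ‖y‖| := by rw [hnorm, hy]
      _ ≤ ‖a • x - y‖ := abs_norm_sub_norm_le _ _
      _ ≤ ε := by rwa [norm_sub_rev]
  calc ‖y - x‖ = ‖(y - a • x) + (a - 1) • x‖ := by rw [sub_smul, one_smul]; abel_nf
    _ ≤ ‖y - a • x‖ + |a - 1| := by
        grw [norm_add_le, norm_smul, hx, Real.norm_eq_abs, mul_one]
    _ ≤ 2 * ε := by linarith

section InnerProductSpace

variable {E : Type*} [NormedAddCommGroup E] [InnerProductSpace ℝ E]

theorem LinearIsometry.abs_inner_map_le_of_inner_eq_zero (f : E →ₗᵢ[ℝ] E) {x z : E}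
    (h : ⟪z, x⟫ = 0) : |⟪z, f x⟫| ≤ ‖f z - z‖ * ‖x‖ := by
  have : ⟪z, f x⟫ = -⟪f z - z, f x⟫ := by
    rw [inner_sub_left, f.inner_map_map, h]; ring
  rw [this, abs_neg, ← f.norm_map x]
  exact abs_real_inner_le_norm _ _

namespace OrthonormalBasis

variable {ι : Type*} [Fintype ι] (b : OrthonormalBasis ι ℝ E)

theorem norm_map_sub_self_le (f : E →ₗ[ℝ] E) (x : E) :
    ‖f x - x‖ ≤ ‖x‖ * ∑ k, ‖f (b k) - b k‖ := by
  have hexp : f x - x = ∑ k, ⟪b k, x⟫ • (f (b k) - b k) := by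
    conv_lhs => rw [← b.sum_repr' x]
    simp only [map_sum, map_smul, smul_sub, sum_sub_distrib]
  rw [hexp, mul_sum]
  refine (norm_sum_le _ _).trans (sum_le_sum fun k _ ↦ ?_)
  rw [norm_smul, Real.norm_eq_abs]
  gcongr
  simpa [b.orthonormal.1 k] using abs_real_inner_le_norm (b k) x

variable [DecidableEq ι]

theorem sum_erase_sq_inner_right (i : ι) (x : E) :
    ∑ k ∈ univ.erase i, ⟪b k, x⟫ ^ 2 = ‖x‖ ^ 2 - ⟪b i, x⟫ ^ 2 := by
  rw [← b.sum_sq_inner_right x, ← add_sum_erase _ _ (mem_univ i)]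
  ring

variable (f : E →ₗᵢ[ℝ] E)

theorem sum_erase_sq_inner_map_le (i : ι) :
    ∑ k ∈ univ.erase i, ⟪b k, f (b i)⟫ ^ 2 ≤ ∑ k ∈ univ.erase i, ‖f (b k) - b k‖ ^ 2 := by
  refine sum_le_sum fun k hk ↦ ?_
  have h := f.abs_inner_map_le_of_inner_eq_zero (b.orthonormal.2 (ne_of_mem_erase hk))
  rw [b.orthonormal.1 i, mul_one] at h
  exact sq_le_sq' (abs_le.mp h).1 (abs_le.mp h).2

/-- `⟪b i, f (b i)⟫ ^ 2 ≥ 1 - ∑ k ∈ univ.erase i, ‖f (b k) - b k‖ ^ 2 ≥ t ^ 2`, so a lower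
bound `-t` on `⟪b i, f (b i)⟫` forces it to be nonnegative. -/
theorem inner_map_self_nonneg_of_neg_lt {i : ι} {t : ℝ} (ht : -t < ⟪b i, f (b i)⟫)
    (hsmall : ∑ k ∈ univ.erase i, ‖f (b k) - b k‖ ^ 2 + t ^ 2 ≤ 1) :
    0 ≤ ⟪b i, f (b i)⟫ := by
  have hparseval := b.sum_erase_sq_inner_right i (f (b i))
  rw [f.norm_map, b.orthonormal.1 i] at hparseval
  have := b.sum_erase_sq_inner_map_le f i
  nlinarith

theorem norm_map_sub_self_sq_le {i : ι} (hpos : 0 ≤ ⟪b i, f (b i)⟫) :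
    ‖f (b i) - b i‖ ^ 2 ≤ 2 * ∑ k ∈ univ.erase i, ‖f (b k) - b k‖ ^ 2 := by
  have hparseval := b.sum_erase_sq_inner_right i (f (b i))
  rw [f.norm_map, b.orthonormal.1 i] at hparseval
  have hle : ⟪b i, f (b i)⟫ ≤ 1 := by
    nlinarith [sum_nonneg fun k (_ : k ∈ univ.erase i) ↦ sq_nonneg ⟪b k, f (b i)⟫]
  have hdist : ‖f (b i) - b i‖ ^ 2 = 2 - 2 * ⟪b i, f (b i)⟫ := by
    rw [norm_sub_sq_real, f.norm_map, b.orthonormal.1 i, real_inner_comm]; ring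
  have := b.sum_erase_sq_inner_map_le f i
  nlinarith

end OrthonormalBasis

end InnerProductSpace

theorem norm_toLp_le_sqrt_card_mul_norm {ι : Type*} [Fintype ι] (x : ι → ℝ) :
    ‖toLp 2 x‖ ≤ √(Fintype.card ι) * ‖x‖ := by
  rw [EuclideanSpace.norm_eq, ← Real.sqrt_sq (norm_nonneg x), ← Real.sqrt_mul (by positivity)]
  refine Real.sqrt_le_sqrt ?_
  calc ∑ i, ‖(toLp 2 x) i‖ ^ 2 ≤ ∑ _i : ι, ‖x‖ ^ 2 := by
        gcongr with i; exact norm_le_pi_norm x i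
    _ = Fintype.card ι * ‖x‖ ^ 2 := by simp

theorem abs_dotProduct_le_norm_mul_norm {ι : Type*} [Fintype ι] (x y : ι → ℝ) :
    |x ⬝ᵥ y| ≤ ‖toLp 2 x‖ * ‖toLp 2 y‖ := by
  simpa [EuclideanSpace.inner_toLp_toLp, mul_comm] using
    abs_real_inner_le_norm (toLp 2 y) (toLp 2 x)

theorem norm_toLp_crossProduct_le (x y : Fin 3 → ℝ) :
    ‖toLp 2 (x ⨯₃ y)‖ ≤ ‖toLp 2 x‖ * ‖toLp 2 y‖ := by
  rw [InnerProductGeometry.norm_toLp_symm_crossProduct]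
  exact mul_le_of_le_one_right (by positivity) (Real.sin_le_one _)

theorem neg_norm_sub_lt_dotProduct_cross_of_det_pos {x v u N : Fin 3 → ℝ}
    (hu : ‖toLp 2 u‖ = 1) (hN : ‖toLp 2 N‖ = 1) (hdet : 0 < (of ![x, u, N]).det) :
    -‖toLp 2 (x - v)‖ < u ⬝ᵥ N ⨯₃ v := by
  have htriple : (of ![x, u, N]).det = x ⬝ᵥ u ⨯₃ N := (triple_product_eq_det x u N).symm
  have hsplit : x ⬝ᵥ u ⨯₃ N = (x - v) ⬝ᵥ u ⨯₃ N + u ⬝ᵥ N ⨯₃ v := by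
    rw [sub_dotProduct, ← triple_product_permutation v u N]; ring
  have hbound : |(x - v) ⬝ᵥ u ⨯₃ N| ≤ ‖toLp 2 (x - v)‖ :=
    calc _ ≤ ‖toLp 2 (x - v)‖ * ‖toLp 2 (u ⨯₃ N)‖ := abs_dotProduct_le_norm_mul_norm _ _
      _ ≤ ‖toLp 2 (x - v)‖ * (‖toLp 2 u‖ * ‖toLp 2 N‖) := by
          gcongr; exact norm_toLp_crossProduct_le u N
      _ = ‖toLp 2 (x - v)‖ := by rw [hu, hN, mul_one, mul_one]
  linarith [abs_le.mp hbound]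

namespace Matrix

variable {n : Type*} [Fintype n] [DecidableEq n]

theorem abs_sub_one_apply_le {ι : Type*} [Fintype ι] (A : Matrix n n ℝ)
    (b : OrthonormalBasis ι ℝ (EuclideanSpace ℝ n)) (i j : n) :
    |(A - 1) i j| ≤ ∑ k, ‖toEuclideanLin A (b k) - b k‖ := by
  set e : EuclideanSpace ℝ n := toLp 2 (Pi.single j 1)
  have hcol : toEuclideanLin A e - e = toLp 2 ((A - 1) *ᵥ Pi.single j 1) := by
    simp only [e, toLpLin_toLp, toLin'_apply, sub_mulVec, one_mulVec, toLp_sub]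
  calc |(A - 1) i j| = ‖(toEuclideanLin A e - e) i‖ := by
        rw [hcol, mulVec_single_one, Real.norm_eq_abs]; rfl
    _ ≤ ‖toEuclideanLin A e - e‖ := PiLp.norm_apply_le _ i
    _ ≤ ‖e‖ * ∑ k, ‖toEuclideanLin A (b k) - b k‖ := b.norm_map_sub_self_le _ e
    _ = ∑ k, ‖toEuclideanLin A (b k) - b k‖ := by rw [show ‖e‖ = 1 by simp [e], one_mul]

noncomputable def toEuclideanLinearIsometry (O : Matrix n n ℝ) (hO : O * Oᵀ = 1) :
    EuclideanSpace ℝ n →ₗᵢ[ℝ] EuclideanSpace ℝ n :=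
  (toEuclideanLin O).isometryOfInner fun x y ↦ by
    simp only [toLpLin_apply, EuclideanSpace.inner_eq_star_dotProduct, star_trivial]
    rw [dotProduct_mulVec, ← vecMul_transpose, vecMul_vecMul, mul_eq_one_comm.mp hO, vecMul_one]

@[simp]
theorem toEuclideanLinearIsometry_toLp (O : Matrix n n ℝ) (hO : O * Oᵀ = 1) (x : n → ℝ) :
    O.toEuclideanLinearIsometry hO (toLp 2 x) = toLp 2 (O *ᵥ x) :=
  rfl

end Matrix

theorem orthonormal_crossProduct_frame {N v : Fin 3 → ℝ} (hN : N ⬝ᵥ N = 1) (hv : v ⬝ᵥ v = 1)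
    (hNv : N ⬝ᵥ v = 0) : Orthonormal ℝ ![toLp 2 N, toLp 2 v, toLp 2 (N ⨯₃ v)] := by
  have hw : (N ⨯₃ v) ⬝ᵥ (N ⨯₃ v) = 1 := by
    rw [cross_dot_cross, hN, hv, hNv, dotProduct_comm v N, hNv]; ring
  rw [orthonormal_iff_ite]
  intro i j
  fin_cases i <;> fin_cases j <;>
    simp only [Fin.isValue, Fin.zero_eta, Fin.mk_one, Fin.reduceFinMk, Matrix.cons_val,
      EuclideanSpace.inner_toLp_toLp, star_trivial] <;>
    simp [hN, hv, hw, hNv, dotProduct_comm v N, dotProduct_comm (N ⨯₃ v), dot_self_cross,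
      dot_cross_self]

noncomputable def crossProductFrame {N v : Fin 3 → ℝ} (hN : N ⬝ᵥ N = 1) (hv : v ⬝ᵥ v = 1)
    (hNv : N ⬝ᵥ v = 0) : OrthonormalBasis (Fin 3) ℝ (EuclideanSpace ℝ (Fin 3)) :=
  OrthonormalBasis.mk (orthonormal_crossProduct_frame hN hv hNv)
    ((orthonormal_crossProduct_frame hN hv hNv).linearIndependent.span_eq_top_of_card_eq_finrank'
      (by simp)).ge

@[simp]
theorem coe_crossProductFrame {N v : Fin 3 → ℝ} (hN : N ⬝ᵥ N = 1) (hv : v ⬝ᵥ v = 1)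
    (hNv : N ⬝ᵥ v = 0) :
    ⇑(crossProductFrame hN hv hNv) = ![toLp 2 N, toLp 2 v, toLp 2 (N ⨯₃ v)] :=
  OrthonormalBasis.coe_mk _ _

theorem almost_identity_rotation :
    ∃ C : ℝ, 0 < C ∧ ∃ δ₀ : ℝ, 0 < δ₀ ∧
    ∀ δ : ℝ, 0 < δ → δ ≤ δ₀ →
    ∀ (O : Matrix (Fin 3) (Fin 3) ℝ) (N v : Fin 3 → ℝ) (a : ℝ),
      O * Oᵀ = 1 →
      N ⬝ᵥ N = 1 → v ⬝ᵥ v = 1 → N ⬝ᵥ v = 0 →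
      ‖O.mulVec N - N‖ ≤ δ →
      0 < a → ‖O.mulVec v - a • v‖ ≤ δ →
      0 < (Matrix.of ![O.mulVec v, O.mulVec (crossProduct N v), N]).det →
      ∀ i j, |(O - 1) i j| ≤ C * δ := by
  refine ⟨13, by norm_num, 1 / 6, by norm_num, ?_⟩
  intro δ hδ hδ₀ O N v a hO hN hv hNv hON ha hOv hdet i j
  set b := crossProductFrame hN hv hNv
  set f := O.toEuclideanLinearIsometry hO
  have hunit : ∀ k, ‖b k‖ = 1 := b.orthonormal.1
  have hL2 : ∀ x : Fin 3 → ℝ, ‖x‖ ≤ δ → ‖toLp 2 x‖ ≤ 2 * δ := fun x hx ↦ by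
    have : √(Fintype.card (Fin 3) : ℝ) ≤ 2 := by
      rw [Real.sqrt_le_left (by norm_num)]; norm_num
    grw [norm_toLp_le_sqrt_card_mul_norm x, this, hx]
  have h0 : ‖f (b 0) - b 0‖ ≤ 2 * δ := by simpa [b, f] using hL2 _ hON
  have h1 : ‖f (b 1) - b 1‖ ≤ 4 * δ := by
    have hsmul : ‖f (b 1) - a • b 1‖ ≤ 2 * δ := by simpa [b, f] using hL2 _ hOv
    linarith [norm_sub_le_two_mul_of_norm_sub_smul_le (hunit 1) (by rw [f.norm_map, hunit 1])
      ha.le hsmul]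
  have hsum : ∑ k ∈ univ.erase 2, ‖f (b k) - b k‖ ^ 2
      = ‖f (b 0) - b 0‖ ^ 2 + ‖f (b 1) - b 1‖ ^ 2 := by
    rw [sum_erase_eq_sub (mem_univ _), Fin.sum_univ_three]; ring
  have hnn := fun k ↦ norm_nonneg (f (b k) - b k)
  have hpos : 0 ≤ ⟪b 2, f (b 2)⟫ := by
    refine b.inner_map_self_nonneg_of_neg_lt f (t := ‖f (b 1) - b 1‖) ?_
      (by rw [hsum]; nlinarith [hnn 0, hnn 1])
    have hOw : ‖toLp 2 (O *ᵥ (N ⨯₃ v))‖ = 1 := by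
      simpa [b, f] using (f.norm_map (b 2)).trans (hunit 2)
    simpa [b, f, EuclideanSpace.inner_toLp_toLp] using
      neg_norm_sub_lt_dotProduct_cross_of_det_pos hOw (by simpa [b] using hunit 0) hdet
  have h2 : ‖f (b 2) - b 2‖ ≤ 7 * δ := by
    have := b.norm_map_sub_self_sq_le f hpos
    rw [hsum] at this
    nlinarith [hnn 0, hnn 1, hnn 2]
  calc |(O - 1) i j| ≤ ∑ k, ‖f (b k) - b k‖ := O.abs_sub_one_apply_le b i j
    _ ≤ 13 * δ := by rw [Fin.sum_univ_three]; linarith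
end
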